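/- For every integer k ≥ 0: Σ_{m=0}^{⌊k/2⌋} C(k, 2m) · C(2m, m) · 2^{−2m} = C(2k, k) · 2^{−k}, where C denotes the binomial coefficient. -/

import Mathlib

/-!
Compare coefficients of `X ^ k` in `(1 + X) ^ (2 * k) = ((1 + X ^ 2) + 2 * X) ^ k`. On the left
it is `C(2k, k)`. On the right, the binomial term `C(k, j) (1 + X ^ 2) ^ j (2 X) ^ (k - j)`
contributes `C(k, j) 2 ^ (k - j)` times the coefficient of `X ^ j` in `(1 + X ^ 2) ^ j`, which is
`C(j, j / 2)` for even `j` and `0` for odd `j`. Dividing by `2 ^ k` gives the identity.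
-/

open Finset Polynomial

theorem Polynomial.coeff_one_add_X_sq_pow (R : Type*) [CommSemiring R] (j n : ℕ) :
    ((1 + X ^ 2 : R[X]) ^ j).coeff n = if 2 ∣ n then (j.choose (n / 2) : R) else 0 := by
  have h : (1 + X ^ 2 : R[X]) ^ j = expand R 2 ((1 + X) ^ j) := by simp
  rw [h, coeff_expand two_pos, coeff_one_add_X_pow]

theorem Finset.sum_range_succ_ite_two_dvd {M : Type*} [AddCommMonoid M] (f : ℕ → M) (n : ℕ) :
    ∑ j ∈ range (n + 1), (if 2 ∣ j then f j else 0) = ∑ m ∈ range (n / 2 + 1), f (2 * m) := by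
  have h : (range (n + 1)).filter (2 ∣ ·) = (range (n / 2 + 1)).image (2 * ·) := by
    ext j
    simp only [mem_filter, mem_range, mem_image]
    constructor
    · rintro ⟨hj, m, rfl⟩
      exact ⟨m, by omega, rfl⟩
    · rintro ⟨m, hm, rfl⟩
      exact ⟨by omega, dvd_mul_right 2 m⟩
  rw [← sum_filter, h, sum_image fun a _ b _ hab => by simpa using hab]

theorem Polynomial.coeff_one_add_X_sq_pow_mul_two_mul_X_pow (R : Type*) [CommSemiring R]
    {j k : ℕ} (hjk : j ≤ k) :
    ((1 + X ^ 2 : R[X]) ^ j * (2 * X) ^ (k - j)).coeff k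
      = if 2 ∣ j then (j.choose (j / 2) * 2 ^ (k - j) : R) else 0 := by
  rw [mul_pow, mul_left_comm, ← C_ofNat, ← C_pow, coeff_C_mul, coeff_mul_X_pow',
    if_pos (Nat.sub_le k j), Nat.sub_sub_self hjk, coeff_one_add_X_sq_pow]
  split_ifs <;> ring

theorem Nat.sum_choose_two_mul_mul_choose_mul_two_pow (k : ℕ) :
    ∑ m ∈ range (k / 2 + 1), k.choose (2 * m) * (2 * m).choose m * 2 ^ (k - 2 * m)
      = (2 * k).choose k := by
  have hsq : (1 + X : ℕ[X]) ^ (2 * k) = ((1 + X ^ 2) + 2 * X) ^ k := by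
    rw [pow_mul]
    ring
  have hterm : ∀ j ∈ range (k + 1),
      ((1 + X ^ 2 : ℕ[X]) ^ j * (2 * X) ^ (k - j) * (k.choose j : ℕ[X])).coeff k
        = if 2 ∣ j then k.choose j * j.choose (j / 2) * 2 ^ (k - j) else 0 := fun j hj => by
    rw [coeff_mul_natCast, coeff_one_add_X_sq_pow_mul_two_mul_X_pow ℕ (mem_range_succ_iff.mp hj)]
    split_ifs <;> simp only [Nat.cast_id] <;> ring
  rw [← Nat.cast_id ((2 * k).choose k), ← coeff_one_add_X_pow ℕ (2 * k) k, hsq, add_pow,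
    finsetSum_coeff, sum_congr rfl hterm, sum_range_succ_ite_two_dvd]
  simp only [Nat.mul_div_cancel_left _ two_pos]

theorem central_binomial_identity (k : ℕ) :
    ∑ m ∈ Finset.range (k / 2 + 1),
        (k.choose (2 * m) : ℝ) * ((2 * m).choose m : ℝ) / 2 ^ (2 * m)
      = ((2 * k).choose k : ℝ) / 2 ^ k := by
  rw [← Nat.sum_choose_two_mul_mul_choose_mul_two_pow k]
  push_cast
  rw [sum_div]
  refine sum_congr rfl fun m hm => ?_
  have h2m : 2 * m ≤ k := by have := mem_range.mp hm; omega
  rw [← pow_sub_mul_pow (2 : ℝ) h2m]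
  field_simp
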